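/- arXiv:2110.02384 — 2 statements merged into one kernel-verified Lean document; each statement's English description precedes it below -/
import Mathlib

section
/- As m → ∞, max over 1 ≤ q < m of q/(m(m-q)²) · 1/ξ(q/m) tends to 0, where ξ(x) = -2(log(1-x)+x). -/
lemma log_aux {x : ℝ} (hx0 : 0 ≤ x) (hx1 : x < 1) :
    x + x ^ 2 / 2 ≤ -Real.log (1 - x) := by
  set f : ℝ → ℝ := fun z => -Real.log (1 - z) - z - z ^ 2 / 2 with hf
  have hder : ∀ y ∈ Set.Icc (0:ℝ) x, HasDerivAt f (-((1 - y)⁻¹ * (-1)) - 1 - 2 * y ^ 1 / 2) y := by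
    intro y hy
    have h1y : (0:ℝ) < 1 - y := by
      have := hy.2; linarith
    have h1 : HasDerivAt (fun z : ℝ => 1 - z) (-1) y := (hasDerivAt_id y).const_sub 1
    have hlog : HasDerivAt (fun z : ℝ => Real.log (1 - z)) ((1 - y)⁻¹ * (-1)) y :=
      (Real.hasDerivAt_log h1y.ne').comp y h1
    exact (hlog.neg.sub (hasDerivAt_id y)).sub ((hasDerivAt_pow 2 y).div_const 2)
  have hmono : MonotoneOn f (Set.Icc 0 x) := by
    apply monotoneOn_of_deriv_nonneg (convex_Icc 0 x)
    · exact fun y hy => (hder y hy).continuousAt.continuousWithinAt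
    · intro y hy
      have hy' : y ∈ Set.Icc (0:ℝ) x := interior_subset hy
      exact (hder y hy').differentiableAt.differentiableWithinAt
    · intro y hy
      rw [interior_Icc] at hy
      have h1y : (0:ℝ) < 1 - y := by have := hy.2; linarith
      rw [(hder y (Set.mem_Icc.2 ⟨hy.1.le, hy.2.le⟩)).deriv]
      have : -((1 - y)⁻¹ * (-1)) - 1 - 2 * y ^ 1 / 2 = y ^ 2 / (1 - y) := by
        field_simp
        ring
      rw [this]
      positivity
  have h0 : f 0 ≤ f x := hmono (Set.mem_Icc.2 ⟨le_refl 0, hx0⟩) (Set.mem_Icc.2 ⟨hx0, le_refl x⟩) hx0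
  simp [hf] at h0
  linarith

noncomputable def xi (x : ℝ) : ℝ := -2 * (Real.log (1 - x) + x)

lemma xi_ge_sq {x : ℝ} (hx0 : 0 ≤ x) (hx1 : x < 1) : x ^ 2 ≤ xi x := by
  have := log_aux hx0 hx1
  unfold xi; linarith

set_option maxHeartbeats 1600000 in
theorem max_q_tendsto_zero :
    ∀ ε > 0, ∃ m₀ : ℕ, ∀ m ≥ m₀, ∀ q : ℕ, 1 ≤ q → q < m →
      (q : ℝ) / ((m : ℝ) * (m - q) ^ 2) * (1 / xi ((q : ℝ) / m)) < ε := by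
  intro ε hε
  refine ⟨max (⌈4 / ε⌉₊ + 1) (⌈Real.exp (2 + 1/ε)⌉₊ + 1), fun m hm q hq1 hqm => ?_⟩
  -- basic facts
  have hm4 : (4:ℝ) / ε < m := by
    have h1 : (⌈4 / ε⌉₊ + 1 : ℕ) ≤ m := le_trans (le_max_left _ _) hm
    have := Nat.le_ceil (4 / ε)
    have h2 : ((⌈4 / ε⌉₊ + 1 : ℕ) : ℝ) ≤ m := by exact_mod_cast h1
    push_cast at h2
    linarith
  have hmexp : Real.exp (2 + 1/ε) ≤ m := by
    have h1 : (⌈Real.exp (2 + 1/ε)⌉₊ + 1 : ℕ) ≤ m := le_trans (le_max_right _ _) hm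
    have := Nat.le_ceil (Real.exp (2 + 1/ε))
    have h2 : ((⌈Real.exp (2 + 1/ε)⌉₊ + 1 : ℕ) : ℝ) ≤ m := by exact_mod_cast h1
    push_cast at h2
    linarith
  have hmεpos : (0:ℝ) < 4 / ε := by positivity
  have hmpos : (0:ℝ) < m := lt_trans hmεpos hm4
  have hqpos : (0:ℝ) < q := by exact_mod_cast hq1
  have hq1' : (1:ℝ) ≤ q := by exact_mod_cast hq1
  have hqm' : (q:ℝ) < m := by exact_mod_cast hqm
  have hr1 : (1:ℝ) ≤ (m:ℝ) - q := by
    have : (q:ℝ) + 1 ≤ m := by exact_mod_cast hqm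
    linarith
  have hrpos : (0:ℝ) < (m:ℝ) - q := by linarith
  have hx0 : (0:ℝ) < (q:ℝ)/m := by positivity
  have hx1 : (q:ℝ)/m < 1 := (div_lt_one hmpos).2 hqm'
  have hxisq : ((q:ℝ)/m) ^ 2 ≤ xi ((q:ℝ)/m) := xi_ge_sq hx0.le hx1
  have hxipos : 0 < xi ((q:ℝ)/m) := lt_of_lt_of_le (by positivity) hxisq
  have hdenpos : (0:ℝ) < (m:ℝ) * ((m:ℝ) - q) ^ 2 := by positivity
  have hApos : (0:ℝ) < (q:ℝ) / ((m:ℝ) * ((m:ℝ) - q) ^ 2) := by positivity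
  have h4m : (4:ℝ) / m < ε := by
    rw [div_lt_iff₀ hmpos]
    rw [div_lt_iff₀ hε] at hm4
    linarith
  have hsq : ((q:ℝ)/m)^2 = (q:ℝ)^2 / (m:ℝ)^2 := by rw [div_pow]
  have hxisq' : (q:ℝ)^2 / (m:ℝ)^2 ≤ xi ((q:ℝ)/m) := hsq ▸ hxisq
  rcases le_or_gt (2*q) m with hcase | hcase
  · -- q ≤ m/2 : r ≥ m/2, use 1/xi ≤ m²/q²
    have h2r : (m:ℝ) ≤ 2 * ((m:ℝ) - q) := by
      have : ((2*q : ℕ):ℝ) ≤ m := by exact_mod_cast hcase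
      push_cast at this
      linarith
    have hinv : 1 / xi ((q:ℝ)/m) ≤ (m:ℝ)^2 / (q:ℝ)^2 := by
      rw [div_le_div_iff₀ hxipos (by positivity)]
      rw [div_le_iff₀ (by positivity : (0:ℝ) < (m:ℝ)^2)] at hxisq'
      linarith
    calc (q : ℝ) / ((m : ℝ) * ((m:ℝ) - q) ^ 2) * (1 / xi ((q : ℝ) / m))
        ≤ (q : ℝ) / ((m : ℝ) * ((m:ℝ) - q) ^ 2) * ((m:ℝ)^2 / (q:ℝ)^2) :=
          mul_le_mul_of_nonneg_left hinv hApos.le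
      _ ≤ 4 / m := by
          rw [div_mul_div_comm, div_le_div_iff₀ (by positivity) hmpos]
          have ha : (m:ℝ)^2 ≤ 4*((m:ℝ)-q)^2 := by nlinarith
          nlinarith [mul_le_mul_of_nonneg_left ha (mul_nonneg hmpos.le hqpos.le),
            mul_le_mul_of_nonneg_left hq1'
              (by positivity : (0:ℝ) ≤ 4*(m:ℝ)*((m:ℝ)-q)^2*q)]
      _ < ε := h4m
  · have h2q : (m:ℝ) < 2*q := by
      have : ((m:ℕ):ℝ) < ((2*q : ℕ):ℝ) := by exact_mod_cast hcase
      push_cast at this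
      linarith
    rcases le_or_gt (m:ℝ) (((m:ℝ)-q)^2) with hbig | hsmall
    · -- r^2 ≥ m, x > 1/2 so xi ≥ 1/4
      have hxhalf : (1:ℝ)/2 < (q:ℝ)/m := by
        rw [div_lt_div_iff₀ (by norm_num) hmpos]; linarith
      have hxi4 : (1:ℝ)/4 ≤ xi ((q:ℝ)/m) := by nlinarith [hxisq]
      have hinv : 1 / xi ((q:ℝ)/m) ≤ 4 := by
        rw [div_le_iff₀ hxipos]; linarith
      have hA : (q:ℝ) / ((m:ℝ) * ((m:ℝ) - q)^2) ≤ 1/m := by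
        rw [div_le_div_iff₀ hdenpos hmpos]
        have := mul_le_mul_of_nonneg_right (le_trans hqm'.le hbig) hmpos.le
        linarith
      calc (q : ℝ) / ((m : ℝ) * ((m:ℝ) - q) ^ 2) * (1 / xi ((q : ℝ) / m))
          ≤ (q : ℝ) / ((m : ℝ) * ((m:ℝ) - q) ^ 2) * 4 :=
            mul_le_mul_of_nonneg_left hinv hApos.le
        _ ≤ (1/m) * 4 := mul_le_mul_of_nonneg_right hA (by norm_num)
        _ < ε := by rw [one_div, inv_mul_eq_div]; linarith [h4m]
    · -- r^2 < m : xi ≥ log m - 2 ≥ 1/ε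
      have hlog : 2 + 1/ε ≤ Real.log m := by
        rw [← Real.log_exp (2 + 1/ε)]
        exact Real.log_le_log (Real.exp_pos _) hmexp
      have hlogr : Real.log ((m:ℝ) - q) ≤ Real.log m / 2 := by
        have h1 : ((m:ℝ) - q) ≤ Real.sqrt m := by
          rw [← Real.sqrt_sq hrpos.le]
          exact Real.sqrt_le_sqrt hsmall.le
        calc Real.log ((m:ℝ) - q) ≤ Real.log (Real.sqrt m) := Real.log_le_log hrpos h1
          _ = Real.log m / 2 := Real.log_sqrt hmpos.le
      have hxilog : Real.log m - 2 ≤ xi ((q:ℝ)/m) := by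
        have h1mx : 1 - (q:ℝ)/m = ((m:ℝ) - q)/m := by field_simp
        have hld : Real.log (1 - (q:ℝ)/m) = Real.log ((m:ℝ)-q) - Real.log m := by
          rw [h1mx, Real.log_div hrpos.ne' hmpos.ne']
        have hxle : (q:ℝ)/m ≤ 1 := hx1.le
        unfold xi
        rw [hld]
        linarith
      have hεinv : (0:ℝ) < 1/ε := by positivity
      have hxiε : 1/ε ≤ xi ((q:ℝ)/m) := by linarith
      have hinv : 1 / xi ((q:ℝ)/m) ≤ ε := by
        rw [div_le_iff₀ hxipos, ← div_le_iff₀' hε]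
        linarith
      have hA : (q:ℝ) / ((m:ℝ) * ((m:ℝ) - q)^2) < 1 := by
        rw [div_lt_one hdenpos]
        have hr2 : (1:ℝ) ≤ ((m:ℝ)-q)^2 := by nlinarith
        have := le_mul_of_one_le_right hmpos.le hr2
        linarith
      calc (q : ℝ) / ((m : ℝ) * ((m:ℝ) - q) ^ 2) * (1 / xi ((q : ℝ) / m))
          < 1 * (1 / xi ((q:ℝ)/m)) :=
            mul_lt_mul_of_pos_right hA (by positivity)
        _ = 1 / xi ((q:ℝ)/m) := one_mul _
        _ ≤ ε := hinv
end

section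
/- Uniformly over integers 1 ≤ q < m as m → ∞: ∑_{i=1}^q (log(m-i) - log(m-1)) = (q - m + 1/2) log(1 - q/m) - (m-1)q/m + O(q/(m(m-q))). -/
lemma h_bound (a : ℝ) (ha : 1 ≤ a) :
    |1 - (a + 1/2) * (Real.log (a+1) - Real.log a)| ≤ 4 / (a*(a+1)) := by
  have ha0 : 0 < a := by linarith
  have ha1 : 0 < a + 1 := by linarith
  set x : ℝ := 1/(a+1) with hx
  have hx0 : 0 < x := by positivity
  have hxhalf : x ≤ 1/2 := by
    rw [hx, div_le_div_iff₀ ha1 (by norm_num)]; linarith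
  have habs : |x| < 1 := by rw [abs_of_pos hx0]; linarith
  have hser := Real.abs_log_sub_add_sum_range_le habs 2
  rw [Finset.sum_range_succ, Finset.sum_range_succ, Finset.sum_range_zero] at hser
  have hlog : Real.log (1 - x) = Real.log a - Real.log (a+1) := by
    have h1x : 1 - x = a / (a+1) := by rw [hx]; field_simp; ring
    rw [h1x, Real.log_div (ne_of_gt ha0) (ne_of_gt ha1)]
  rw [hlog, abs_of_pos hx0] at hser
  norm_num at hser
  -- hser : |0 + x^1/1 + x^2/2 + (log a - log (a+1))| ≤ x^3 / (1 - x)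
  have hrem : x ^ 3 / (1 - x) = 1 / (a * (a+1)^2) := by
    rw [hx]; field_simp [ha0.ne']; ring
  rw [hrem] at hser
  set L := Real.log (a+1) - Real.log a with hL
  have he : |x + x^2/2 - L| ≤ 1 / (a * (a+1)^2) := by
    have heq : x + x ^ 2 / 2 + (Real.log a - Real.log (a+1)) = x + x^2/2 - L := by
      rw [hL]; ring
    rwa [heq] at hser
  have hid : 1 - (a + 1/2) * L = 1/(4*(a+1)^2) + (a+1/2) * (x + x^2/2 - L) := by
    rw [hx]; field_simp; ring
  rw [hid]
  have h1 : |1/(4*(a+1)^2) + (a+1/2) * (x + x^2/2 - L)| ≤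
      1/(4*(a+1)^2) + (a+1/2) * |x + x^2/2 - L| := by
    calc _ ≤ |1/(4*(a+1)^2)| + |(a+1/2) * (x + x^2/2 - L)| := abs_add_le _ _
    _ = 1/(4*(a+1)^2) + (a+1/2) * |x + x^2/2 - L| := by
        rw [abs_mul, abs_of_pos (by positivity), abs_of_pos (by positivity)]
  have h2 : (a+1/2) * |x + x^2/2 - L| ≤ (a+1/2) * (1 / (a * (a+1)^2)) :=
    mul_le_mul_of_nonneg_left he (by positivity)
  have h3 : 1/(4*(a+1)^2) + (a+1/2) * (1 / (a * (a+1)^2)) ≤ 4 / (a*(a+1)) := by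
    have hd : 4 / (a*(a+1)) - (1/(4*(a+1)^2) + (a+1/2) * (1/(a*(a+1)^2)))
        = (11*a+14)/(4*a*(a+1)^2) := by
      field_simp
      ring
    have hnn : (0:ℝ) ≤ (11*a+14)/(4*a*(a+1)^2) := by positivity
    linarith
  linarith

lemma g_bound (m : ℝ) (hm : 2 ≤ m) :
    |Real.log m - Real.log (m-1) - 1/m| ≤ 1/(m*(m-1)) := by
  have hm0 : 0 < m := by linarith
  have hm1 : 0 < m - 1 := by linarith
  have h1 : Real.log (m / (m-1)) ≤ m/(m-1) - 1 := Real.log_le_sub_one_of_pos (by positivity)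
  have h2 : Real.log ((m-1) / m) ≤ (m-1)/m - 1 := Real.log_le_sub_one_of_pos (by positivity)
  rw [Real.log_div (ne_of_gt hm0) (ne_of_gt hm1)] at h1
  rw [Real.log_div (ne_of_gt hm1) (ne_of_gt hm0)] at h2
  have e1 : m/(m-1) - 1 = 1/(m-1) := by field_simp; ring
  have e2 : (m-1)/m - 1 = -(1/m) := by field_simp; ring
  have e3 : 1/(m-1) - 1/m = 1/(m*(m-1)) := by field_simp; ring
  rw [e1] at h1; rw [e2] at h2
  rw [abs_of_nonneg (by linarith)]
  linarith

theorem sum_log_diff_expansion :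
    ∃ C : ℝ, ∃ m₀ : ℕ, ∀ m ≥ m₀, ∀ q : ℕ, 1 ≤ q → q < m →
      |(∑ i ∈ Finset.Icc 1 q, (Real.log ((m : ℝ) - i) - Real.log ((m : ℝ) - 1))) -
          (((q : ℝ) - m + 1 / 2) * Real.log (1 - (q : ℝ) / m) -
            ((m : ℝ) - 1) * q / m)| ≤
        C * q / (m * ((m : ℝ) - q)) := by
  refine ⟨5, 2, ?_⟩
  intro m hm q hq1 hqm
  have hm2 : (2:ℝ) ≤ (m:ℝ) := by exact_mod_cast hm
  have hm0 : (0:ℝ) < m := by linarith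
  have hm1 : (0:ℝ) < (m:ℝ) - 1 := by linarith
  have key : ∀ p : ℕ, p < m →
      |(∑ i ∈ Finset.Icc 1 p, (Real.log ((m : ℝ) - i) - Real.log ((m : ℝ) - 1))) -
          (((p : ℝ) - m + 1 / 2) * (Real.log ((m:ℝ) - p) - Real.log m) -
            ((m : ℝ) - 1) * p / m)| ≤
        (p:ℝ)/((m:ℝ)*((m:ℝ)-1)) + 4*(1/((m:ℝ)-(p:ℝ)) - 1/(m:ℝ)) := by
    intro p
    induction p with
    | zero => intro _; norm_num
    | succ p ih =>
      intro hpm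
      have hp : p < m := Nat.lt_of_succ_lt hpm
      have hpm' : (p:ℝ) + 2 ≤ (m:ℝ) := by exact_mod_cast hpm
      have ha1 : (1:ℝ) ≤ (m:ℝ) - (p:ℝ) - 1 := by linarith
      have ha0 : (0:ℝ) < (m:ℝ) - (p:ℝ) - 1 := by linarith
      have hb0 : (0:ℝ) < (m:ℝ) - (p:ℝ) := by linarith
      rw [Finset.sum_Icc_succ_top (Nat.succ_le_succ (Nat.zero_le p))]
      push_cast
      have e0 : (m:ℝ) - ((p:ℝ)+1) = (m:ℝ) - (p:ℝ) - 1 := by ring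
      rw [e0]
      have hb := h_bound ((m:ℝ) - (p:ℝ) - 1) ha1
      have e2 : ((m:ℝ) - (p:ℝ) - 1) + 1 = (m:ℝ) - (p:ℝ) := by ring
      rw [e2] at hb
      have hg := g_bound (m:ℝ) hm2
      set S := ∑ i ∈ Finset.Icc 1 p, (Real.log ((m : ℝ) - i) - Real.log ((m : ℝ) - 1)) with hS
      set L1 := Real.log ((m:ℝ) - (p:ℝ) - 1) with hL1
      set L2 := Real.log ((m:ℝ) - (p:ℝ)) with hL2
      set L3 := Real.log (m:ℝ) with hL3
      set L4 := Real.log ((m:ℝ) - 1) with hL4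
      have hid : S + (L1 - L4) - ((((p:ℝ)+1) - (m:ℝ) + 1/2)*(L1 - L3) - ((m:ℝ)-1)*((p:ℝ)+1)/(m:ℝ))
          = (S - (((p:ℝ) - (m:ℝ) + 1/2)*(L2 - L3) - ((m:ℝ)-1)*(p:ℝ)/(m:ℝ)))
            + ((1 - (((m:ℝ)-(p:ℝ)-1) + 1/2)*(L2 - L1)) + (L3 - L4 - 1/(m:ℝ))) := by
        field_simp
        ring
      calc |S + (L1 - L4) - ((((p:ℝ)+1) - (m:ℝ) + 1/2)*(L1 - L3) - ((m:ℝ)-1)*((p:ℝ)+1)/(m:ℝ))|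
          = |(S - (((p:ℝ) - (m:ℝ) + 1/2)*(L2 - L3) - ((m:ℝ)-1)*(p:ℝ)/(m:ℝ)))
            + ((1 - (((m:ℝ)-(p:ℝ)-1) + 1/2)*(L2 - L1)) + (L3 - L4 - 1/(m:ℝ)))| := by rw [hid]
        _ ≤ |S - (((p:ℝ) - (m:ℝ) + 1/2)*(L2 - L3) - ((m:ℝ)-1)*(p:ℝ)/(m:ℝ))|
            + (|1 - (((m:ℝ)-(p:ℝ)-1) + 1/2)*(L2 - L1)| + |L3 - L4 - 1/(m:ℝ)|) :=
          (abs_add_le _ _).trans (add_le_add_right (abs_add_le _ _) _)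
        _ ≤ ((p:ℝ)/((m:ℝ)*((m:ℝ)-1)) + 4*(1/((m:ℝ)-(p:ℝ)) - 1/(m:ℝ)))
            + (4/(((m:ℝ)-(p:ℝ)-1)*((m:ℝ)-(p:ℝ))) + 1/((m:ℝ)*((m:ℝ)-1))) :=
          add_le_add (ih hp) (add_le_add hb hg)
        _ = ((p:ℝ)+1)/((m:ℝ)*((m:ℝ)-1)) + 4*(1/((m:ℝ)-(p:ℝ)-1) - 1/(m:ℝ)) := by
          have etel : 4/(((m:ℝ)-(p:ℝ)-1)*((m:ℝ)-(p:ℝ)))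
              = 4/((m:ℝ)-(p:ℝ)-1) - 4/((m:ℝ)-(p:ℝ)) := by
            field_simp
            ring
          have e4 : ((p:ℝ)+1)/((m:ℝ)*((m:ℝ)-1)) = (p:ℝ)/((m:ℝ)*((m:ℝ)-1)) + 1/((m:ℝ)*((m:ℝ)-1)) := by
            field_simp
          rw [etel, e4]
          ring
  have hqm' : (q:ℝ) < (m:ℝ) := by exact_mod_cast hqm
  have hq1' : (1:ℝ) ≤ (q:ℝ) := by exact_mod_cast hq1
  have hmq0 : (0:ℝ) < (m:ℝ) - (q:ℝ) := by linarith
  have hmq1 : (1:ℝ) ≤ (m:ℝ) - (q:ℝ) := by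
    have : q + 1 ≤ m := hqm
    have : ((q:ℝ) + 1) ≤ (m:ℝ) := by exact_mod_cast this
    linarith
  have hlog : Real.log (1 - (q:ℝ)/(m:ℝ)) = Real.log ((m:ℝ)-(q:ℝ)) - Real.log (m:ℝ) := by
    rw [show (1 - (q:ℝ)/(m:ℝ)) = ((m:ℝ)-(q:ℝ))/(m:ℝ) from by field_simp, 
      Real.log_div (ne_of_gt hmq0) (ne_of_gt hm0)]
  rw [hlog]
  have hk := key q hqm
  have h5 : (q:ℝ)/((m:ℝ)*((m:ℝ)-1)) + 4*(1/((m:ℝ)-(q:ℝ)) - 1/(m:ℝ)) ≤ 5*(q:ℝ)/((m:ℝ)*((m:ℝ)-(q:ℝ))) := by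
    have hA : (q:ℝ)/((m:ℝ)*((m:ℝ)-1)) ≤ (q:ℝ)/((m:ℝ)*((m:ℝ)-(q:ℝ))) := by
      gcongr <;> nlinarith
    have hB : 4*(1/((m:ℝ)-(q:ℝ)) - 1/(m:ℝ)) = 4*(q:ℝ)/((m:ℝ)*((m:ℝ)-(q:ℝ))) := by
      field_simp
      ring
    have e5 : 5*(q:ℝ)/((m:ℝ)*((m:ℝ)-(q:ℝ))) = (q:ℝ)/((m:ℝ)*((m:ℝ)-(q:ℝ))) + 4*(q:ℝ)/((m:ℝ)*((m:ℝ)-(q:ℝ))) := by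
      ring
    linarith
  linarith
end
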